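/- arXiv:2508.15416 — 2 statements merged into one kernel-verified Lean document; each statement's English description precedes it below -/
import Mathlib

section
/- Let d ≥ 1, T > 0, ε > 0, γ > 1. Let ρ, θ : (0,T) × ℝ^d → ℝ be positive C¹ functions and u : (0,T) × ℝ^d → ℝ^d a C¹ vector field satisfying pointwise on (0,T) × ℝ^d the mass equation ∂_t ρ + div(ρu) = 0, the momentum equations ∂_t(ρ u_i) + div(ρ u_i u) + ε^{−2} ∂_{x_i} p = 0 for each i, and the total potential temperature equation ∂_t(ρθ) + div(ρθ u) = 0, where p = (ρθ)^γ. Then the total energy identity holds pointwise: ∂_t(½ ρ |u|² + ε^{−2} Π_γ(ρθ)) + div((½ ρ |u|² + ε^{−2} ψ_γ(ρθ) − ε^{−2} ψ_γ′(1) ρθ + ε^{−2} p) u) = 0. -/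
open Set MeasureTheory

/-- Time partial derivative `∂ₜ f` of a function of `(t, x) ∈ ℝ × ℝ^d`. -/
noncomputable def pderivT {d : ℕ} (f : ℝ × (Fin d → ℝ) → ℝ) (z : ℝ × (Fin d → ℝ)) : ℝ :=
  fderiv ℝ f z (1, 0)

/-- Spatial partial derivative `∂_{x i} f` of a function of `(t, x) ∈ ℝ × ℝ^d`. -/
noncomputable def pderivX {d : ℕ} (i : Fin d) (f : ℝ × (Fin d → ℝ) → ℝ)
    (z : ℝ × (Fin d → ℝ)) : ℝ :=
  fderiv ℝ f z (0, Pi.single i 1)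

/-- Spatial divergence of a (time-dependent) vector field on `ℝ^d`. -/
noncomputable def diverg {d : ℕ} (w : ℝ × (Fin d → ℝ) → Fin d → ℝ)
    (z : ℝ × (Fin d → ℝ)) : ℝ :=
  ∑ i, pderivX i (fun y => w y i) z

/-- The Helmholtz function `ψ_γ(z) = z^γ / (γ - 1)`. -/
noncomputable def psiH (γ : ℝ) (z : ℝ) : ℝ := z ^ γ / (γ - 1)

/-- The derivative `ψ_γ'(z) = γ z^(γ-1) / (γ - 1)` of the Helmholtz function. -/
noncomputable def psiH' (γ : ℝ) (z : ℝ) : ℝ := γ * z ^ (γ - 1) / (γ - 1)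

/-- The relative internal energy `Π_γ(z) = ψ_γ(z) - ψ_γ(1) - ψ_γ'(1) (z - 1)`. -/
noncomputable def PiH (γ : ℝ) (z : ℝ) : ℝ := psiH γ z - psiH γ 1 - psiH' γ 1 * (z - 1)

/-!
Write `T f = ∂ₜ f + div (f u)` and `D = ∂ₜ + u · ∇`. The product rule `T (f g) = g T f + f D g`
gives `T (½ ρ |u|²) = ∑ᵢ uᵢ T (ρ uᵢ) - ½ |u|² T ρ`, so by the mass and momentum equations the
kinetic energy balance leaves only the pressure work `-ε⁻² u · ∇p`.
For the internal energy, the chain rule gives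
`∂ₜ F(q) + div (H(q) u) = F'(q) T q + (H' - F')(q) u · ∇q` whenever `H(s) = s F'(s)`.
With `F = ε⁻² Π` this holds for the flux `H = ε⁻² (ψ - ψ'(1) s + p)` because `p = s ψ' - ψ`,
and then `H' - F' = ε⁻² p'`: for `q = ρθ` the remainder is `ε⁻² u · ∇p`, which cancels the
pressure work.
-/

section Calculus
variable {E : Type*} [NormedAddCommGroup E] [NormedSpace ℝ E] {f g : E → ℝ} {z : E}

theorem fderiv_fun_mul_apply (hf : DifferentiableAt ℝ f z) (hg : DifferentiableAt ℝ g z) (v : E) :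
    fderiv ℝ (fun y => f y * g y) z v = f z * fderiv ℝ g z v + g z * fderiv ℝ f z v := by
  simp [fderiv_fun_mul hf hg]

theorem HasDerivAt.fderiv_comp_apply {F : ℝ → ℝ} {F' : ℝ} (hF : HasDerivAt F F' (f z))
    (hf : DifferentiableAt ℝ f z) (v : E) :
    fderiv ℝ (fun y => F (f y)) z v = F' * fderiv ℝ f z v := by
  rw [← Function.comp_def, (hF.comp_hasFDerivAt z hf.hasFDerivAt).fderiv]
  simp

end Calculus

section Helmholtz
variable {γ s : ℝ}

theorem hasDerivAt_psiH (hs : 0 < s) : HasDerivAt (psiH γ) (psiH' γ s) s :=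
  (Real.hasDerivAt_rpow_const (Or.inl hs.ne')).div_const (γ - 1)

theorem hasDerivAt_PiH (hs : 0 < s) : HasDerivAt (PiH γ) (psiH' γ s - psiH' γ 1) s := by
  have h := ((hasDerivAt_psiH (γ := γ) hs).sub_const (psiH γ 1)).fun_sub
    (((hasDerivAt_id' s).sub_const 1).const_mul (psiH' γ 1))
  rwa [mul_one] at h

theorem mul_psiH'_eq_psiH_add_rpow (hγ : γ ≠ 1) (hs : 0 < s) :
    s * psiH' γ s = psiH γ s + s ^ γ := by
  have hγ' : γ - 1 ≠ 0 := sub_ne_zero.mpr hγ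
  have hpow : s * s ^ (γ - 1) = s ^ γ := by
    rw [mul_comm, ← Real.rpow_add_one hs.ne', sub_add_cancel]
  unfold psiH psiH'
  field_simp
  linear_combination γ * hpow

end Helmholtz

section Transport
open Finset
variable {d : ℕ} {u : ℝ × (Fin d → ℝ) → Fin d → ℝ} {f g : ℝ × (Fin d → ℝ) → ℝ}
  {z : ℝ × (Fin d → ℝ)}

noncomputable def transport (u : ℝ × (Fin d → ℝ) → Fin d → ℝ) (f : ℝ × (Fin d → ℝ) → ℝ)
    (z : ℝ × (Fin d → ℝ)) : ℝ :=
  pderivT f z + diverg (fun y j => f y * u y j) z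

noncomputable def materialDeriv (u : ℝ × (Fin d → ℝ) → Fin d → ℝ) (f : ℝ × (Fin d → ℝ) → ℝ)
    (z : ℝ × (Fin d → ℝ)) : ℝ :=
  pderivT f z + ∑ j, u z j * pderivX j f z

theorem transport_mul (hu : DifferentiableAt ℝ u z) (hf : DifferentiableAt ℝ f z)
    (hg : DifferentiableAt ℝ g z) :
    transport u (fun y => f y * g y) z = g z * transport u f z + f z * materialDeriv u g z := by
  have huj : ∀ j, DifferentiableAt ℝ (fun y => u y j) z := differentiableAt_pi.mp hu
  have hfu : ∀ j, DifferentiableAt ℝ (fun y => f y * u y j) z := fun j => hf.mul (huj j)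
  have hflux : ∀ j, (fun y => f y * g y * u y j) = fun y => (f y * u y j) * g y := by
    intro j; funext y; ring
  simp only [transport, materialDeriv, diverg, pderivT, pderivX, hflux,
    fderiv_fun_mul_apply hf hg, fderiv_fun_mul_apply (hfu _) hg, sum_add_distrib, mul_add, mul_sum]
  ring_nf

theorem pderivT_add (hf : DifferentiableAt ℝ f z) (hg : DifferentiableAt ℝ g z) :
    pderivT (fun y => f y + g y) z = pderivT f z + pderivT g z := by
  simp [pderivT, fderiv_fun_add hf hg]

theorem diverg_add {v w : ℝ × (Fin d → ℝ) → Fin d → ℝ}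
    (hv : ∀ j, DifferentiableAt ℝ (fun y => v y j) z)
    (hw : ∀ j, DifferentiableAt ℝ (fun y => w y j) z) :
    diverg (fun y j => v y j + w y j) z = diverg v z + diverg w z := by
  simp [diverg, pderivX, fderiv_fun_add (hv _) (hw _), sum_add_distrib]

theorem materialDeriv_half_sum_sq (hu : DifferentiableAt ℝ u z) :
    materialDeriv u (fun y => 1 / 2 * ∑ i, u y i ^ 2) z
      = ∑ i, u z i * materialDeriv u (fun y => u y i) z := by
  have huj : ∀ j, DifferentiableAt ℝ (fun y => u y j) z := differentiableAt_pi.mp hu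
  simp (disch := fun_prop) only [materialDeriv, pderivT, pderivX, fderiv_const_mul,
    fderiv_fun_sum, fderiv_fun_pow, smul_apply, _root_.sum_apply, smul_eq_mul, nsmul_eq_mul,
    mul_sum, mul_add, sum_add_distrib]
  rw [sum_comm]
  congr! 2
  · ring
  · exact sum_congr rfl fun j _ => by ring

theorem transport_kineticEnergy {ρ : ℝ × (Fin d → ℝ) → ℝ} (hu : DifferentiableAt ℝ u z)
    (hρ : DifferentiableAt ℝ ρ z) :
    transport u (fun y => 1 / 2 * ρ y * ∑ i, u y i ^ 2) z
      = ∑ i, u z i * transport u (fun y => ρ y * u y i) z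
        - (1 / 2 * ∑ i, u z i ^ 2) * transport u ρ z := by
  have huj : ∀ j, DifferentiableAt ℝ (fun y => u y j) z := differentiableAt_pi.mp hu
  have hk : DifferentiableAt ℝ (fun y => 1 / 2 * ∑ i, u y i ^ 2) z := by fun_prop
  rw [show (fun y => 1 / 2 * ρ y * ∑ i, u y i ^ 2) = fun y => ρ y * (1 / 2 * ∑ i, u y i ^ 2) by
    funext y; ring, transport_mul hu hρ hk, materialDeriv_half_sum_sq hu, ← sub_eq_zero]
  simp only [transport_mul hu hρ (huj _), mul_sum, sum_mul, ← sum_add_distrib, ← sum_sub_distrib]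
  exact sum_eq_zero fun i _ => by ring

theorem pderivT_comp_add_diverg_comp_mul {q : ℝ × (Fin d → ℝ) → ℝ} {F H : ℝ → ℝ} {F' H' : ℝ}
    (hu : DifferentiableAt ℝ u z) (hq : DifferentiableAt ℝ q z) (hF : HasDerivAt F F' (q z))
    (hH : HasDerivAt H H' (q z)) (hHF : H (q z) = q z * F') :
    pderivT (fun y => F (q y)) z + diverg (fun y j => H (q y) * u y j) z
      = F' * transport u q z + (H' - F') * ∑ j, u z j * pderivX j q z := by
  have huj : ∀ j, DifferentiableAt ℝ (fun y => u y j) z := differentiableAt_pi.mp hu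
  have hHq : DifferentiableAt ℝ (fun y => H (q y)) z := hH.differentiableAt.comp z hq
  simp only [transport, diverg, pderivT, pderivX, hF.fderiv_comp_apply hq,
    fderiv_fun_mul_apply hHq (huj _), fderiv_fun_mul_apply hq (huj _), hH.fderiv_comp_apply hq,
    hHF, mul_add, mul_sum]
  rw [add_assoc, ← sum_add_distrib]
  exact congrArg _ (sum_congr rfl fun j _ => by ring)

variable {ρ q : ℝ × (Fin d → ℝ) → ℝ} {γ : ℝ}

theorem internalEnergy_balance (hγ : γ ≠ 1) (c : ℝ) (hu : DifferentiableAt ℝ u z)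
    (hq : DifferentiableAt ℝ q z) (hq_pos : 0 < q z) :
    pderivT (fun y => c * PiH γ (q y)) z
        + diverg (fun y j => (c * psiH γ (q y) - c * psiH' γ 1 * q y + c * q y ^ γ) * u y j) z
      = c * (psiH' γ (q z) - psiH' γ 1) * transport u q z
        + c * ∑ j, u z j * pderivX j (fun y => q y ^ γ) z := by
  have hpow := Real.hasDerivAt_rpow_const (p := γ) (Or.inl hq_pos.ne')
  have hflux : HasDerivAt (fun s => c * psiH γ s - c * psiH' γ 1 * s + c * s ^ γ)
      (c * psiH' γ (q z) - c * psiH' γ 1 * 1 + c * (γ * q z ^ (γ - 1))) (q z) :=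
    (((hasDerivAt_psiH hq_pos).const_mul c).sub ((hasDerivAt_id' _).const_mul _)).add
      (hpow.const_mul c)
  rw [pderivT_comp_add_diverg_comp_mul hu hq ((hasDerivAt_PiH hq_pos).const_mul c) hflux
    (by linear_combination -c * mul_psiH'_eq_psiH_add_rpow hγ hq_pos)]
  simp only [hpow.fderiv_comp_apply hq, pderivX, mul_sum]
  exact congrArg _ (sum_congr rfl fun j _ => by ring)

theorem total_energy_balance (hγ : γ ≠ 1) (c : ℝ) (hu : DifferentiableAt ℝ u z)
    (hρ : DifferentiableAt ℝ ρ z) (hq : DifferentiableAt ℝ q z) (hq_pos : 0 < q z) :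
    pderivT (fun y => 1 / 2 * ρ y * ∑ i, u y i ^ 2 + c * PiH γ (q y)) z
        + diverg (fun y j => (1 / 2 * ρ y * ∑ i, u y i ^ 2 + c * psiH γ (q y)
            - c * psiH' γ 1 * q y + c * q y ^ γ) * u y j) z
      = ∑ i, u z i * (transport u (fun y => ρ y * u y i) z + c * pderivX i (fun y => q y ^ γ) z)
        - (1 / 2 * ∑ i, u z i ^ 2) * transport u ρ z
        + c * (psiH' γ (q z) - psiH' γ 1) * transport u q z := by
  have hPi := (hasDerivAt_PiH (γ := γ) hq_pos).differentiableAt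
  have hψ := (hasDerivAt_psiH (γ := γ) hq_pos).differentiableAt
  have huj : ∀ j, DifferentiableAt ℝ (fun y => u y j) z := differentiableAt_pi.mp hu
  have hflux : (fun y j => (1 / 2 * ρ y * ∑ i, u y i ^ 2 + c * psiH γ (q y)
        - c * psiH' γ 1 * q y + c * q y ^ γ) * u y j)
      = fun y j => (1 / 2 * ρ y * ∑ i, u y i ^ 2) * u y j
        + (c * psiH γ (q y) - c * psiH' γ 1 * q y + c * q y ^ γ) * u y j := by
    funext y j; ring
  rw [hflux, pderivT_add (by fun_prop) (by fun_prop),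
    diverg_add (by fun_prop) (by fun_prop (disch := positivity)), add_add_add_comm,
    internalEnergy_balance hγ c hu hq hq_pos]
  change transport u (fun y => 1 / 2 * ρ y * ∑ i, u y i ^ 2) z + _ = _
  rw [transport_kineticEnergy hu hρ]
  simp only [mul_add, sum_add_distrib, mul_sum, mul_left_comm c]
  ring

end Transport

theorem total_energy_identity_general
    (d : ℕ) (T ε γ : ℝ) (hγ : 1 < γ)
    (ρ θ : ℝ × (Fin d → ℝ) → ℝ) (u : ℝ × (Fin d → ℝ) → Fin d → ℝ)
    (hρ : ContDiffOn ℝ 1 ρ (Ioo (0:ℝ) T ×ˢ (univ : Set (Fin d → ℝ))))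
    (hθ : ContDiffOn ℝ 1 θ (Ioo (0:ℝ) T ×ˢ (univ : Set (Fin d → ℝ))))
    (hu : ContDiffOn ℝ 1 u (Ioo (0:ℝ) T ×ˢ (univ : Set (Fin d → ℝ))))
    (hρpos : ∀ z ∈ Ioo (0:ℝ) T ×ˢ (univ : Set (Fin d → ℝ)), 0 < ρ z)
    (hθpos : ∀ z ∈ Ioo (0:ℝ) T ×ˢ (univ : Set (Fin d → ℝ)), 0 < θ z)
    (hmass : ∀ z ∈ Ioo (0:ℝ) T ×ˢ (univ : Set (Fin d → ℝ)),
      pderivT ρ z + diverg (fun y i => ρ y * u y i) z = 0)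
    (hmom : ∀ z ∈ Ioo (0:ℝ) T ×ˢ (univ : Set (Fin d → ℝ)), ∀ i : Fin d,
      pderivT (fun y => ρ y * u y i) z + diverg (fun y j => ρ y * u y i * u y j) z
        + (ε ^ 2)⁻¹ * pderivX i (fun y => (ρ y * θ y) ^ γ) z = 0)
    (htemp : ∀ z ∈ Ioo (0:ℝ) T ×ˢ (univ : Set (Fin d → ℝ)),
      pderivT (fun y => ρ y * θ y) z + diverg (fun y i => ρ y * θ y * u y i) z = 0) :
    ∀ z ∈ Ioo (0:ℝ) T ×ˢ (univ : Set (Fin d → ℝ)),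
      pderivT (fun y => (1 / 2) * ρ y * ∑ i, (u y i) ^ 2 + (ε ^ 2)⁻¹ * PiH γ (ρ y * θ y)) z
        + diverg (fun y j =>
            ((1 / 2) * ρ y * ∑ i, (u y i) ^ 2 + (ε ^ 2)⁻¹ * psiH γ (ρ y * θ y)
              - (ε ^ 2)⁻¹ * psiH' γ 1 * (ρ y * θ y) + (ε ^ 2)⁻¹ * (ρ y * θ y) ^ γ) * u y j) z
        = 0 := by
  intro z hz
  have hz_nhds := (isOpen_Ioo.prod isOpen_univ).mem_nhds hz
  have hρz := (hρ.differentiableOn one_ne_zero).differentiableAt hz_nhds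
  have hθz := (hθ.differentiableOn one_ne_zero).differentiableAt hz_nhds
  have huz := (hu.differentiableOn one_ne_zero).differentiableAt hz_nhds
  have hmass' : transport u ρ z = 0 := hmass z hz
  have htemp' : transport u (fun y => ρ y * θ y) z = 0 := htemp z hz
  have hmom' : ∀ i, transport u (fun y => ρ y * u y i) z
      + (ε ^ 2)⁻¹ * pderivX i (fun y => (ρ y * θ y) ^ γ) z = 0 := hmom z hz
  rw [total_energy_balance (q := fun y => ρ y * θ y) hγ.ne' _ huz hρz (hρz.mul hθz)
    (mul_pos (hρpos z hz) (hθpos z hz))]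
  simp [hmass', htemp', hmom']

theorem total_energy_identity
    (d : ℕ) (hd : 1 ≤ d) (T ε γ : ℝ) (hT : 0 < T) (hε : 0 < ε) (hγ : 1 < γ)
    (ρ θ : ℝ × (Fin d → ℝ) → ℝ) (u : ℝ × (Fin d → ℝ) → Fin d → ℝ)
    (hρ : ContDiffOn ℝ 1 ρ (Ioo (0:ℝ) T ×ˢ (univ : Set (Fin d → ℝ))))
    (hθ : ContDiffOn ℝ 1 θ (Ioo (0:ℝ) T ×ˢ (univ : Set (Fin d → ℝ))))
    (hu : ContDiffOn ℝ 1 u (Ioo (0:ℝ) T ×ˢ (univ : Set (Fin d → ℝ))))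
    (hρpos : ∀ z ∈ Ioo (0:ℝ) T ×ˢ (univ : Set (Fin d → ℝ)), 0 < ρ z)
    (hθpos : ∀ z ∈ Ioo (0:ℝ) T ×ˢ (univ : Set (Fin d → ℝ)), 0 < θ z)
    (hmass : ∀ z ∈ Ioo (0:ℝ) T ×ˢ (univ : Set (Fin d → ℝ)),
      pderivT ρ z + diverg (fun y i => ρ y * u y i) z = 0)
    (hmom : ∀ z ∈ Ioo (0:ℝ) T ×ˢ (univ : Set (Fin d → ℝ)), ∀ i : Fin d,
      pderivT (fun y => ρ y * u y i) z + diverg (fun y j => ρ y * u y i * u y j) z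
        + (ε ^ 2)⁻¹ * pderivX i (fun y => (ρ y * θ y) ^ γ) z = 0)
    (htemp : ∀ z ∈ Ioo (0:ℝ) T ×ˢ (univ : Set (Fin d → ℝ)),
      pderivT (fun y => ρ y * θ y) z + diverg (fun y i => ρ y * θ y * u y i) z = 0) :
    ∀ z ∈ Ioo (0:ℝ) T ×ˢ (univ : Set (Fin d → ℝ)),
      pderivT (fun y => (1 / 2) * ρ y * ∑ i, (u y i) ^ 2 + (ε ^ 2)⁻¹ * PiH γ (ρ y * θ y)) z
        + diverg (fun y j =>
            ((1 / 2) * ρ y * ∑ i, (u y i) ^ 2 + (ε ^ 2)⁻¹ * psiH γ (ρ y * θ y)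
              - (ε ^ 2)⁻¹ * psiH' γ 1 * (ρ y * θ y) + (ε ^ 2)⁻¹ * (ρ y * θ y) ^ γ) * u y j) z
        = 0 :=
  total_energy_identity_general d T ε γ hγ ρ θ u hρ hθ hu hρpos hθpos hmass hmom htemp
end

section
/- Let γ > 1, let (Ω, μ) be a measure space with μ(Ω) < ∞, and let r ∈ [1, min{2, γ}]. Let (f^ε)_{ε > 0} be a family of measurable functions f^ε : Ω → [0, ∞) and C > 0 a constant such that ∫_Ω Π_γ(f^ε) dμ ≤ C ε² for all ε > 0. Then ‖f^ε − 1‖_{L^r(Ω)} → 0 as ε → 0; that is, f^ε converges to the constant function 1 in L^r(Ω). -/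
/-!
For every `δ > 0` there is `K` with `|z - 1| ^ r ≤ δ + K Π_γ(z)` for all `z ≥ 0`: near `z = 1`
trivially, on the rest of a bounded interval because `Π_γ` is continuous and positive there
(compactness), and at infinity because `Π_γ(z)` grows like `z ^ γ ≥ |z - 1| ^ r`. Integrating gives
`‖f^ε - 1‖_r ^ r ≤ δ μ(Ω) + K C ε²`, and `δ` is arbitrary.
-/

open Set MeasureTheory Filter
open scoped ENNReal Topology

/-- The relative internal energy `Π_γ(z) = (z^γ - 1 - γ (z - 1)) / (γ - 1)`. -/
noncomputable def PiFn (γ : ℝ) (z : ℝ) : ℝ := (z ^ γ - 1 - γ * (z - 1)) / (γ - 1)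

universe u

section PiFn

variable {γ : ℝ}

lemma PiFn_nonneg (hγ : 1 < γ) {z : ℝ} (hz : 0 ≤ z) : 0 ≤ PiFn γ z := by
  have h := one_add_mul_self_le_rpow_one_add (s := z - 1) (by linarith) hγ.le
  rw [add_sub_cancel] at h
  exact div_nonneg (by linarith) (by linarith)

lemma PiFn_pos (hγ : 1 < γ) {z : ℝ} (hz : 0 ≤ z) (hz1 : z ≠ 1) : 0 < PiFn γ z := by
  have h := one_add_mul_self_lt_rpow_one_add (s := z - 1) (by linarith) (sub_ne_zero.2 hz1) hγ
  rw [add_sub_cancel] at h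
  exact div_pos (by linarith) (by linarith)

lemma continuous_PiFn (hγ : 1 < γ) : Continuous (PiFn γ) := by
  unfold PiFn
  fun_prop (disch := linarith)

lemma eventually_rpow_le_PiFn (hγ : 1 < γ) :
    ∀ᶠ z in atTop, z ^ γ ≤ 2 * (γ - 1) * PiFn γ z := by
  filter_upwards [eventually_ge_atTop 1,
    (tendsto_rpow_atTop (sub_pos.2 hγ)).eventually_ge_atTop (2 * γ)] with z hz hzγ
  have hsplit : z ^ γ = z ^ (γ - 1) * z := by
    rw [← Real.rpow_add_one (by positivity), sub_add_cancel]
  have hPi : (γ - 1) * PiFn γ z = z ^ γ - 1 - γ * (z - 1) := by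
    unfold PiFn
    field_simp [(sub_pos.2 hγ).ne']
  nlinarith

lemma exists_abs_sub_one_rpow_le_add_PiFn (hγ : 1 < γ) {r : ℝ} (hr : 0 < r) (hrγ : r ≤ γ)
    {δ : ℝ} (hδ : 0 < δ) :
    ∃ K : ℝ, 0 ≤ K ∧ ∀ z : ℝ, 0 ≤ z → |z - 1| ^ r ≤ δ + K * PiFn γ z := by
  obtain ⟨M, hM⟩ := eventually_atTop.1 <|
    (eventually_rpow_le_PiFn hγ).and (eventually_ge_atTop 2)
  set S : Set ℝ := Icc 0 M ∩ {z | δ ≤ |z - 1| ^ r}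
  have hcont : Continuous fun z : ℝ => |z - 1| ^ r := by fun_prop (disch := linarith)
  have hS : IsCompact S := isCompact_Icc.inter_right (isClosed_le continuous_const hcont)
  have hPi_ne : ∀ z ∈ S, PiFn γ z ≠ 0 := by
    rintro z ⟨⟨hz, -⟩, hδz⟩
    refine (PiFn_pos hγ hz fun h => ?_).ne'
    simp [h, Real.zero_rpow hr.ne'] at hδz
    linarith
  obtain ⟨B, hB⟩ := hS.bddAbove_image (hcont.continuousOn.div (continuous_PiFn hγ).continuousOn hPi_ne)
  have hK : 0 < max B (2 * (γ - 1)) := lt_max_of_lt_right (by linarith)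
  refine ⟨max B (2 * (γ - 1)), hK.le, fun z hz => ?_⟩
  have hPi := PiFn_nonneg hγ hz
  suffices |z - 1| ^ r < δ ∨ |z - 1| ^ r ≤ max B (2 * (γ - 1)) * PiFn γ z by
    rcases this with h | h <;> nlinarith
  by_cases hzM : M ≤ z
  · obtain ⟨hgrowth, hz2⟩ := hM z hzM
    have hz1 : 0 ≤ z - 1 := by linarith
    right
    calc |z - 1| ^ r = (z - 1) ^ r := by rw [abs_of_nonneg hz1]
      _ ≤ z ^ r := Real.rpow_le_rpow hz1 (by linarith) hr.le
      _ ≤ z ^ γ := Real.rpow_le_rpow_of_exponent_le (by linarith) hrγ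
      _ ≤ 2 * (γ - 1) * PiFn γ z := hgrowth
      _ ≤ max B (2 * (γ - 1)) * PiFn γ z := by gcongr; exact le_max_right _ _
  · refine (lt_or_ge _ δ).imp_right fun hδz => ?_
    have hzS : z ∈ S := ⟨⟨hz, (not_le.1 hzM).le⟩, hδz⟩
    have hratio : |z - 1| ^ r / PiFn γ z ≤ B := hB (mem_image_of_mem _ hzS)
    rw [div_le_iff₀ (lt_of_le_of_ne hPi (hPi_ne z hzS).symm)] at hratio
    exact hratio.trans (by gcongr; exact le_max_left _ _)

lemma exists_lintegral_enorm_sub_one_rpow_le {Ω : Type*} [MeasurableSpace Ω] (μ : Measure Ω)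
    (hγ : 1 < γ) {r : ℝ} (hr : 0 < r) (hrγ : r ≤ γ) {δ : ℝ} (hδ : 0 < δ) :
    ∃ K : ℝ≥0∞, K ≠ ∞ ∧ ∀ g : Ω → ℝ, (∀ x, 0 ≤ g x) →
      ∫⁻ x, ‖g x - 1‖ₑ ^ r ∂μ ≤
        ENNReal.ofReal δ * μ univ + K * ∫⁻ x, ENNReal.ofReal (PiFn γ (g x)) ∂μ := by
  obtain ⟨K, hK, hbound⟩ := exists_abs_sub_one_rpow_le_add_PiFn hγ hr hrγ hδ
  refine ⟨ENNReal.ofReal K, ENNReal.ofReal_ne_top, fun g hg => ?_⟩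
  have hpointwise : ∀ x, ‖g x - 1‖ₑ ^ r ≤
      ENNReal.ofReal δ + ENNReal.ofReal K * ENNReal.ofReal (PiFn γ (g x)) := fun x => by
    rw [Real.enorm_eq_ofReal_abs, ENNReal.ofReal_rpow_of_nonneg (abs_nonneg _) hr.le,
      ← ENNReal.ofReal_mul hK, ← ENNReal.ofReal_add hδ.le (mul_nonneg hK (PiFn_nonneg hγ (hg x)))]
    exact ENNReal.ofReal_le_ofReal (hbound _ (hg x))
  calc ∫⁻ x, ‖g x - 1‖ₑ ^ r ∂μ
      ≤ ∫⁻ x, ENNReal.ofReal δ + ENNReal.ofReal K * ENNReal.ofReal (PiFn γ (g x)) ∂μ :=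
        lintegral_mono hpointwise
    _ = _ := by
      rw [lintegral_add_left measurable_const, lintegral_const,
        lintegral_const_mul' _ _ ENNReal.ofReal_ne_top]

end PiFn

lemma ENNReal.tendsto_zero_of_forall_le_ofReal_mul_add_mul {ι : Type*} {l : Filter ι}
    {u v : ι → ℝ≥0∞} {c : ℝ≥0∞} (hc : c ≠ ∞) (hv : Tendsto v l (𝓝 0))
    (h : ∀ δ : ℝ, 0 < δ → ∃ K : ℝ≥0∞, K ≠ ∞ ∧ ∀ᶠ i in l, u i ≤ ENNReal.ofReal δ * c + K * v i) :
    Tendsto u l (𝓝 0) := by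
  refine ENNReal.tendsto_nhds_zero.2 fun a ha => ?_
  have ha2 : 0 < a / 2 := ENNReal.half_pos ha.ne'
  have hδc : Tendsto (fun δ : ℝ => ENNReal.ofReal δ * c) (𝓝[>] 0) (𝓝 (ENNReal.ofReal 0 * c)) :=
    ENNReal.Tendsto.mul_const
      (ENNReal.tendsto_ofReal (tendsto_nhdsWithin_of_tendsto_nhds tendsto_id)) (Or.inr hc)
  rw [ENNReal.ofReal_zero, zero_mul] at hδc
  obtain ⟨δ, hδc, hδ⟩ := ((hδc.eventually (eventually_le_nhds ha2)).and self_mem_nhdsWithin).exists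
  obtain ⟨K, hK, hu⟩ := h δ hδ
  have hKv : ∀ᶠ i in l, K * v i ≤ a / 2 := by
    have := ENNReal.Tendsto.const_mul hv (Or.inr hK)
    rw [mul_zero] at this
    exact this.eventually (eventually_le_nhds ha2)
  filter_upwards [hu, hKv] with i hui hvi
  calc u i ≤ ENNReal.ofReal δ * c + K * v i := hui
    _ ≤ a / 2 + a / 2 := add_le_add hδc hvi
    _ = a := ENNReal.add_halves a

theorem Lr_convergence_to_one_general (γ : ℝ) (hγ : 1 < γ)
    (Ω : Type u) [MeasurableSpace Ω] (μ : Measure Ω) [IsFiniteMeasure μ]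
    (r : ℝ) (hr : r ∈ Icc (1:ℝ) (min 2 γ))
    (f : ℝ → Ω → ℝ) (C : ℝ)
    (hnn : ∀ ε : ℝ, 0 < ε → ∀ x, 0 ≤ f ε x)
    (hbd : ∀ ε : ℝ, 0 < ε →
      (∫⁻ x, ENNReal.ofReal (PiFn γ (f ε x)) ∂μ) ≤ ENNReal.ofReal (C * ε ^ 2)) :
    Tendsto (fun ε : ℝ => eLpNorm (fun x => f ε x - 1) (ENNReal.ofReal r) μ)
      (nhdsWithin 0 (Ioi 0)) (nhds 0) := by
  have hr0 : 0 < r := by linarith [hr.1]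
  have hrγ : r ≤ γ := hr.2.trans (min_le_right _ _)
  have henergy : Tendsto (fun ε => ∫⁻ x, ENNReal.ofReal (PiFn γ (f ε x)) ∂μ) (𝓝[>] 0) (𝓝 0) := by
    have hCε : Tendsto (fun ε : ℝ => ENNReal.ofReal (C * ε ^ 2)) (𝓝[>] 0) (𝓝 0) := by
      simpa using ENNReal.tendsto_ofReal
        (tendsto_nhdsWithin_of_tendsto_nhds ((continuous_const.mul (continuous_pow 2)).tendsto 0))
    exact tendsto_of_tendsto_of_tendsto_of_le_of_le' tendsto_const_nhds hCε
      (Eventually.of_forall fun _ => bot_le) (eventually_mem_nhdsWithin.mono hbd)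
  have hlintegral : Tendsto (fun ε => ∫⁻ x, ‖f ε x - 1‖ₑ ^ r ∂μ) (𝓝[>] 0) (𝓝 0) := by
    refine ENNReal.tendsto_zero_of_forall_le_ofReal_mul_add_mul (measure_ne_top μ univ) henergy
      fun δ hδ => ?_
    obtain ⟨K, hK, hle⟩ := exists_lintegral_enorm_sub_one_rpow_le μ hγ hr0 hrγ hδ
    exact ⟨K, hK, eventually_mem_nhdsWithin.mono fun ε hε => hle _ (hnn ε hε)⟩
  simp_rw [eLpNorm_eq_lintegral_rpow_enorm_toReal (ENNReal.ofReal_pos.2 hr0).ne' ENNReal.ofReal_ne_top,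
    ENNReal.toReal_ofReal hr0.le]
  have hroot := ((ENNReal.continuous_rpow_const (y := 1 / r)).tendsto 0).comp hlintegral
  rwa [ENNReal.zero_rpow_of_pos (by positivity)] at hroot

theorem Lr_convergence_to_one (γ : ℝ) (hγ : 1 < γ)
    (Ω : Type u) [MeasurableSpace Ω] (μ : Measure Ω) [IsFiniteMeasure μ]
    (r : ℝ) (hr : r ∈ Icc (1:ℝ) (min 2 γ))
    (f : ℝ → Ω → ℝ) (C : ℝ) (hC : 0 < C)
    (hmeas : ∀ ε : ℝ, 0 < ε → Measurable (f ε))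
    (hnn : ∀ ε : ℝ, 0 < ε → ∀ x, 0 ≤ f ε x)
    (hbd : ∀ ε : ℝ, 0 < ε →
      (∫⁻ x, ENNReal.ofReal (PiFn γ (f ε x)) ∂μ) ≤ ENNReal.ofReal (C * ε ^ 2)) :
    Tendsto (fun ε : ℝ => eLpNorm (fun x => f ε x - 1) (ENNReal.ofReal r) μ)
      (nhdsWithin 0 (Ioi 0)) (nhds 0) :=
  Lr_convergence_to_one_general γ hγ Ω μ r hr f C hnn hbd
end
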